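/- Let μ₁, μ₂ ∈ ℝ and let X and Y be independent real random variables with X distributed according to the Gaussian measure with mean μ₁ and variance 1/2 and Y distributed according to the Gaussian measure with mean μ₂ and variance 1/2. Then E[ sgn(X) · sgn(Y) ] = Φ(μ₁) · Φ(μ₂). -/

import Mathlib

open MeasureTheory ProbabilityTheory
open scoped NNReal

/-- The error function `Φ(x) = (2/√π) ∫₀ˣ exp(−t²) dt`. -/
noncomputable def erf (x : ℝ) : ℝ :=
  2 / Real.sqrt Real.pi * ∫ t in (0 : ℝ)..x, Real.exp (-t ^ 2)

/-!
The expectation factors under the product measure, so it suffices to show `E[sgn X] = Φ(μ)` for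
`X ~ N(μ, 1/2)`. Write `X = Z + μ` with `Z` centred, of even density `φ`. Then `sgn (Z + μ)` is `1`
on `(-μ, ∞)` and `-1` on `(-∞, -μ)`, and by evenness `∫_{-∞}^{-μ} φ = ∫_{μ}^{∞} φ`, so
`E[sgn X] = ∫_{-μ}^{μ} φ = 2 ∫_0^μ φ`. For variance `1/2`, `φ t = π^{-1/2} exp (-t²)`.
-/

open Real Set

lemma Real.measurable_sign : Measurable Real.sign :=
  Measurable.ite measurableSet_Iio measurable_const
    (Measurable.ite measurableSet_Ioi measurable_const measurable_const)

lemma Real.abs_sign_le_one (r : ℝ) : |Real.sign r| ≤ 1 := by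
  rcases Real.sign_apply_eq r with h | h | h <;> simp [h]

lemma integral_sign_add_mul {f : ℝ → ℝ} (hf : Integrable f) (a : ℝ) :
    ∫ x, Real.sign (x + a) * f x = (∫ x in Ioi (-a), f x) - ∫ x in Iic (-a), f x := by
  have hint : Integrable fun x ↦ Real.sign (x + a) * f x :=
    hf.bdd_mul (c := 1) (Real.measurable_sign.comp (measurable_add_const a)).aestronglyMeasurable
      (.of_forall fun x ↦ Real.abs_sign_le_one _)
  have hIoi : ∫ x in Ioi (-a), Real.sign (x + a) * f x = ∫ x in Ioi (-a), f x :=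
    setIntegral_congr_fun measurableSet_Ioi fun x (hx : -a < x) ↦ by
      rw [Real.sign_of_pos (by linarith), one_mul]
  have hIio : ∫ x in Iio (-a), Real.sign (x + a) * f x = -∫ x in Iio (-a), f x := by
    rw [← integral_neg]
    exact setIntegral_congr_fun measurableSet_Iio fun x (hx : x < -a) ↦ by
      rw [Real.sign_of_neg (by linarith), neg_one_mul]
  rw [← integral_add_compl measurableSet_Ioi hint, compl_Ioi, integral_Iic_eq_integral_Iio, hIoi,
    hIio, integral_Iic_eq_integral_Iio, sub_eq_add_neg]

lemma integral_sign_add_mul_of_even {f : ℝ → ℝ} (hf : Integrable f) (heven : Function.Even f)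
    (a : ℝ) : ∫ x, Real.sign (x + a) * f x = 2 * ∫ t in 0..a, f t := by
  have hIic : ∫ x in Iic (-a), f x = ∫ x in Ioi a, f x := by
    rw [← integral_comp_neg_Ioi]
    simp only [show ∀ x, f (-x) = f x from heven]
  have hsymm : ∫ t in -a..0, f t = ∫ t in 0..a, f t := by
    rw [← neg_zero, ← intervalIntegral.integral_comp_neg, neg_zero]
    simp only [show ∀ x, f (-x) = f x from heven]
  rw [integral_sign_add_mul hf, hIic, intervalIntegral.integral_Ioi_sub_Ioi' hf.integrableOn
    hf.integrableOn, ← intervalIntegral.integral_add_adjacent_intervals (b := 0)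
    hf.intervalIntegrable hf.intervalIntegrable, hsymm, two_mul]

lemma even_gaussianPDFReal_zero (v : ℝ≥0) : Function.Even (gaussianPDFReal 0 v) := fun x ↦ by
  simp [gaussianPDFReal]

lemma integral_sign_gaussianReal (μ : ℝ) {v : ℝ≥0} (hv : v ≠ 0) :
    ∫ x, Real.sign x ∂gaussianReal μ v = 2 * ∫ t in 0..μ, gaussianPDFReal 0 v t := by
  have hshift : gaussianReal μ v = (gaussianReal 0 v).map (· + μ) := by
    rw [gaussianReal_map_add_const, zero_add]
  rw [hshift, integral_map (measurable_add_const μ).aemeasurable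
      Real.measurable_sign.aestronglyMeasurable, integral_gaussianReal_eq_integral_smul hv]
  simp_rw [smul_eq_mul, mul_comm (gaussianPDFReal 0 v _)]
  exact integral_sign_add_mul_of_even (integrable_gaussianPDFReal 0 v)
    (even_gaussianPDFReal_zero v) μ

lemma gaussianPDFReal_zero_half (t : ℝ) :
    gaussianPDFReal 0 (1 / 2) t = (√π)⁻¹ * exp (-t ^ 2) := by
  have hvar : ((1 / 2 : ℝ≥0) : ℝ) = 1 / 2 := by norm_num
  rw [gaussianPDFReal, hvar, sub_zero, show 2 * π * (1 / 2) = π by ring,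
    show 2 * (1 / 2 : ℝ) = 1 by norm_num, div_one]

lemma integral_sign_gaussianReal_half (μ : ℝ) :
    ∫ x, Real.sign x ∂gaussianReal μ (1 / 2) = erf μ := by
  rw [integral_sign_gaussianReal μ (by norm_num)]
  simp only [gaussianPDFReal_zero_half, intervalIntegral.integral_const_mul, erf]
  ring

/-- If `X ~ N(μ₁, 1/2)` and `Y ~ N(μ₂, 1/2)` are independent, then
`E[sgn X · sgn Y] = Φ(μ₁) · Φ(μ₂)`. -/
theorem expectation_sign_mul_sign_indep_gaussian (μ₁ μ₂ : ℝ) :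
    ∫ p : ℝ × ℝ, Real.sign p.1 * Real.sign p.2
        ∂((gaussianReal μ₁ (1 / 2)).prod (gaussianReal μ₂ (1 / 2))) =
      erf μ₁ * erf μ₂ := by
  rw [integral_prod_mul Real.sign Real.sign, integral_sign_gaussianReal_half,
    integral_sign_gaussianReal_half]
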